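/- arXiv:2603.12101 — 3 statements merged into one kernel-verified Lean document; each statement's English description precedes it below -/
import Mathlib

section
/- Let (X,q) be a T₀-quasi-metric space. For each x ∈ X the ample pair f_x := (q(x,·), q(·,x)) is minimal: if g = (g₁,g₂) is ample with g₁ ≤ (f_x)₁ and g₂ ≤ (f_x)₂ pointwise, then g = f_x. -/
theorem canonical_pair_minimal
    {X : Type*} (q : X → X → ℝ)
    (hq0 : ∀ x, q x x = 0)
    (hqnn : ∀ x y, 0 ≤ q x y)
    (hqtri : ∀ x y z, q x z ≤ q x y + q y z)
    (hsep : ∀ x y, q x y = 0 → q y x = 0 → x = y)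
    (x : X) (g₁ g₂ : X → ℝ)
    (hg₁nn : ∀ y, 0 ≤ g₁ y) (hg₂nn : ∀ y, 0 ≤ g₂ y)
    (hample : ∀ u v, q u v ≤ g₂ u + g₁ v)
    (hle₁ : ∀ y, g₁ y ≤ q x y) (hle₂ : ∀ y, g₂ y ≤ q y x) :
    (∀ y, g₁ y = q x y) ∧ (∀ y, g₂ y = q y x) := by
  have h2x : g₂ x = 0 := le_antisymm (by simpa [hq0] using hle₂ x) (hg₂nn x)
  have h1x : g₁ x = 0 := le_antisymm (by simpa [hq0] using hle₁ x) (hg₁nn x)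
  constructor
  · intro y
    have := hample x y
    rw [h2x, zero_add] at this
    exact le_antisymm (hle₁ y) this
  · intro y
    have := hample y x
    rw [h1x, add_zero] at this
    exact le_antisymm (hle₂ y) this
end

section
/- Let (X,q) be a T₀-quasi-metric space and f=(f₁,f₂), g=(g₁,g₂) minimal ample pairs with sup_{x} (g₁(x)−f₁(x))^+ finite. Then sup_{x∈X} (g₁(x) − f₁(x))^+ = sup_{x∈X} (f₂(x) − g₂(x))^+. -/
/-- An ample pair on a quasi-metric space. -/
def Ample {X : Type*} (q : X → X → ℝ) (f₁ f₂ : X → ℝ) : Prop :=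
  (∀ x, 0 ≤ f₁ x) ∧ (∀ x, 0 ≤ f₂ x) ∧ ∀ u v, q u v ≤ f₂ u + f₁ v

/-- A minimal ample pair. -/
def MinimalAmple {X : Type*} (q : X → X → ℝ) (f₁ f₂ : X → ℝ) : Prop :=
  Ample q f₁ f₂ ∧
    ∀ g₁ g₂ : X → ℝ, Ample q g₁ g₂ → (∀ x, g₁ x ≤ f₁ x) → (∀ x, g₂ x ≤ f₂ x) →
      g₁ = f₁ ∧ g₂ = f₂

lemma minAmple_fst {X : Type*} (q : X → X → ℝ) (g₁ g₂ : X → ℝ)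
    (hg : MinimalAmple q g₁ g₂) (x₀ : X) (c : ℝ) (hc : 0 ≤ c)
    (h : ∀ z, q z x₀ - g₂ z ≤ c) : g₁ x₀ ≤ c := by
  classical
  set h₁ : X → ℝ := Function.update g₁ x₀ (min (g₁ x₀) c) with hh
  have hA : Ample q h₁ g₂ := by
    refine ⟨fun x => ?_, hg.1.2.1, fun u v => ?_⟩
    · by_cases hx : x = x₀ <;>
        simp [hh, Function.update_apply, hx, le_min (hg.1.1 x₀) hc, hg.1.1 x]
    · by_cases hv : v = x₀
      · subst hv
        simp only [hh, Function.update_apply, if_pos rfl]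
        have h1 := hg.1.2.2 u v
        have h2 := h u
        rcases le_total (g₁ v) c with h' | h' <;>
          simp [min_eq_left, min_eq_right, h'] <;> linarith
      · simpa [hh, Function.update_apply, hv] using hg.1.2.2 u v
  obtain ⟨heq, -⟩ := hg.2 h₁ g₂ hA
    (fun x => by by_cases hx : x = x₀ <;>
      simp [hh, Function.update_apply, hx, min_le_left]) (fun x => le_rfl)
  have this : min (g₁ x₀) c = g₁ x₀ := by
    simpa [hh] using congrFun heq x₀
  rcases le_total (g₁ x₀) c with h' | h'
  · exact h'
  · rw [min_eq_right h'] at this; linarith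

lemma minAmple_snd {X : Type*} (q : X → X → ℝ) (g₁ g₂ : X → ℝ)
    (hg : MinimalAmple q g₁ g₂) (x₀ : X) (c : ℝ) (hc : 0 ≤ c)
    (h : ∀ z, q x₀ z - g₁ z ≤ c) : g₂ x₀ ≤ c := by
  classical
  set h₂ : X → ℝ := Function.update g₂ x₀ (min (g₂ x₀) c) with hh
  have hA : Ample q g₁ h₂ := by
    refine ⟨hg.1.1, fun x => ?_, fun u v => ?_⟩
    · by_cases hx : x = x₀ <;>
        simp [hh, Function.update_apply, hx, le_min (hg.1.2.1 x₀) hc, hg.1.2.1 x]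
    · by_cases hu : u = x₀
      · subst hu
        simp only [hh, Function.update_apply, if_pos rfl]
        have h1 := hg.1.2.2 u v
        have h2 := h v
        rcases le_total (g₂ u) c with h' | h' <;>
          simp [min_eq_left, min_eq_right, h'] <;> linarith
      · simpa [hh, Function.update_apply, hu] using hg.1.2.2 u v
  obtain ⟨-, heq⟩ := hg.2 g₁ h₂ hA (fun x => le_rfl)
    (fun x => by by_cases hx : x = x₀ <;>
      simp [hh, Function.update_apply, hx, min_le_left])
  have this : min (g₂ x₀) c = g₂ x₀ := by
    simpa [hh] using congrFun heq x₀
  rcases le_total (g₂ x₀) c with h' | h'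
  · exact h'
  · rw [min_eq_right h'] at this; linarith

theorem hull_quasi_metric_dual
    {X : Type*} (q : X → X → ℝ)
    (hq0 : ∀ x, q x x = 0)
    (hqnn : ∀ x y, 0 ≤ q x y)
    (hqtri : ∀ x y z, q x z ≤ q x y + q y z)
    (hsep : ∀ x y, q x y = 0 → q y x = 0 → x = y)
    (f₁ f₂ g₁ g₂ : X → ℝ)
    (hf : MinimalAmple q f₁ f₂) (hg : MinimalAmple q g₁ g₂)
    (hb : BddAbove (Set.range fun x => max (g₁ x - f₁ x) 0)) :
    (⨆ x, max (g₁ x - f₁ x) 0) = ⨆ x, max (f₂ x - g₂ x) 0 := by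
  cases isEmpty_or_nonempty X with
  | inl hX =>
    rw [iSup, iSup, Set.range_eq_empty, Set.range_eq_empty, Real.sSup_empty]
  | inr hX =>
    obtain ⟨x₀⟩ := id hX
    set S₁ := ⨆ x, max (g₁ x - f₁ x) 0 with hS₁
    have hS₁nn : 0 ≤ S₁ :=
      le_trans (le_max_right _ 0) (le_ciSup hb x₀)
    have hle₁ : ∀ x, max (g₁ x - f₁ x) 0 ≤ S₁ := fun x => le_ciSup hb x
    -- Claim A : each (f₂ x - g₂ x)⁺ ≤ S₁
    have claimA : ∀ x, max (f₂ x - g₂ x) 0 ≤ S₁ := by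
      intro x
      have hf₂ : f₂ x ≤ g₂ x + S₁ := by
        refine minAmple_snd q f₁ f₂ hf x (g₂ x + S₁)
          (add_nonneg (hg.1.2.1 x) hS₁nn) (fun z => ?_)
        have h1 := hg.1.2.2 x z
        have h2 : g₁ z - f₁ z ≤ S₁ := le_trans (le_max_left _ 0) (hle₁ z)
        linarith
      exact max_le (by linarith) hS₁nn
    have hb₂ : BddAbove (Set.range fun x => max (f₂ x - g₂ x) 0) := by
      refine ⟨S₁, ?_⟩
      rintro y ⟨x, rfl⟩
      exact claimA x
    set S₂ := ⨆ x, max (f₂ x - g₂ x) 0 with hS₂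
    have hS₂nn : 0 ≤ S₂ :=
      le_trans (le_max_right _ 0) (le_ciSup hb₂ x₀)
    have hle₂ : ∀ x, max (f₂ x - g₂ x) 0 ≤ S₂ := fun x => le_ciSup hb₂ x
    -- Claim B : each (g₁ x - f₁ x)⁺ ≤ S₂
    have claimB : ∀ x, max (g₁ x - f₁ x) 0 ≤ S₂ := by
      intro x
      have hg₁ : g₁ x ≤ f₁ x + S₂ := by
        refine minAmple_fst q g₁ g₂ hg x (f₁ x + S₂)
          (add_nonneg (hf.1.1 x) hS₂nn) (fun z => ?_)
        have h1 := hf.1.2.2 z x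
        have h2 : f₂ z - g₂ z ≤ S₂ := le_trans (le_max_left _ 0) (hle₂ z)
        linarith
      exact max_le (by linarith) hS₂nn
    exact le_antisymm (ciSup_le claimB) (ciSup_le claimA)
end

section
/- Let (X,q,W) be a convex T₀-quasi-metric space, A ⊆ X nonempty and bounded, and for f ∈ X define r_f(A) := max{ sup_{g∈A} q(f,g), sup_{g∈A} q(g,f) }. Then for all f,g ∈ X and λ ∈ [0,1], r_{W(f,g,λ)}(A) ≤ λ r_f(A) + (1−λ) r_g(A); in particular, for each c ≥ 0 the set {f ∈ A : r_f(A) ≤ c} is W-convex whenever A is W-convex. -/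
theorem chebyshev_radius_convex
    {X : Type*} (q : X → X → ℝ) (W : X → X → ℝ → X) (A : Set X)
    (hq0 : ∀ x, q x x = 0)
    (hqnn : ∀ x y, 0 ≤ q x y)
    (hqtri : ∀ x y z, q x z ≤ q x y + q y z)
    (hsep : ∀ x y, q x y = 0 → q y x = 0 → x = y)
    (hW1 : ∀ x y z : X, ∀ lam : ℝ, 0 ≤ lam → lam ≤ 1 →
      q z (W x y lam) ≤ lam * q z x + (1 - lam) * q z y)
    (hW2 : ∀ x y z : X, ∀ lam : ℝ, 0 ≤ lam → lam ≤ 1 →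
      q (W x y lam) z ≤ lam * q x z + (1 - lam) * q y z)
    (hA : A.Nonempty)
    (hbdd : ∀ f : X, BddAbove (Set.range fun g : A => q f g) ∧
      BddAbove (Set.range fun g : A => q (g : X) f)) :
    (∀ f g : X, ∀ lam : ℝ, 0 ≤ lam → lam ≤ 1 →
      max (⨆ a : A, q (W f g lam) a) (⨆ a : A, q (a : X) (W f g lam))
        ≤ lam * max (⨆ a : A, q f a) (⨆ a : A, q (a : X) f)
          + (1 - lam) * max (⨆ a : A, q g a) (⨆ a : A, q (a : X) g)) ∧
    (∀ c : ℝ, 0 ≤ c →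
      (∀ x ∈ A, ∀ y ∈ A, ∀ lam : ℝ, 0 ≤ lam → lam ≤ 1 → W x y lam ∈ A) →
      ∀ x ∈ A, ∀ y ∈ A, ∀ lam : ℝ, 0 ≤ lam → lam ≤ 1 →
        max (⨆ a : A, q x a) (⨆ a : A, q (a : X) x) ≤ c →
        max (⨆ a : A, q y a) (⨆ a : A, q (a : X) y) ≤ c →
        W x y lam ∈ A ∧
          max (⨆ a : A, q (W x y lam) a) (⨆ a : A, q (a : X) (W x y lam)) ≤ c) := by
  have hne : Nonempty A := hA.to_subtype
  have key : ∀ f g : X, ∀ lam : ℝ, 0 ≤ lam → lam ≤ 1 →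
      max (⨆ a : A, q (W f g lam) a) (⨆ a : A, q (a : X) (W f g lam))
        ≤ lam * max (⨆ a : A, q f a) (⨆ a : A, q (a : X) f)
          + (1 - lam) * max (⨆ a : A, q g a) (⨆ a : A, q (a : X) g) := by
    intro f g lam h0 h1
    have h1' : (0:ℝ) ≤ 1 - lam := by linarith
    apply max_le
    · apply ciSup_le
      intro a
      calc q (W f g lam) a ≤ lam * q f a + (1 - lam) * q g a := hW2 f g a lam h0 h1
        _ ≤ lam * max (⨆ a : A, q f a) (⨆ a : A, q (a : X) f)
            + (1 - lam) * max (⨆ a : A, q g a) (⨆ a : A, q (a : X) g) := by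
          gcongr
          · exact le_trans (le_ciSup (hbdd f).1 a) (le_max_left _ _)
          · exact le_trans (le_ciSup (hbdd g).1 a) (le_max_left _ _)
    · apply ciSup_le
      intro a
      calc q (a : X) (W f g lam) ≤ lam * q a f + (1 - lam) * q a g := hW1 f g a lam h0 h1
        _ ≤ lam * max (⨆ a : A, q f a) (⨆ a : A, q (a : X) f)
            + (1 - lam) * max (⨆ a : A, q g a) (⨆ a : A, q (a : X) g) := by
          gcongr
          · exact le_trans (le_ciSup (hbdd f).2 a) (le_max_right _ _)
          · exact le_trans (le_ciSup (hbdd g).2 a) (le_max_right _ _)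
  refine ⟨key, ?_⟩
  intro c _ hconv x hx y hy lam h0 h1 hxc hyc
  refine ⟨hconv x hx y hy lam h0 h1, ?_⟩
  calc max (⨆ a : A, q (W x y lam) a) (⨆ a : A, q (a : X) (W x y lam))
      ≤ lam * max (⨆ a : A, q x a) (⨆ a : A, q (a : X) x)
        + (1 - lam) * max (⨆ a : A, q y a) (⨆ a : A, q (a : X) y) := key x y lam h0 h1
    _ ≤ lam * c + (1 - lam) * c := by
        have : (0:ℝ) ≤ 1 - lam := by linarith
        gcongr
    _ = c := by ring
end
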